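/- Let (A,∘,[·,·]) be a Gel'fand-Dorfman bialgebra over K and V a 1-dimensional vector space with basis {x}. Then the correspondence (p,q,S,T,a1,k,η,D) ↦ (l_A, r_A, l_V, r_V, f, ∗, ◁, ▷, h, {·,·}) given by l_A(a)x = p(a)x, r_A(a)x = q(a)x, l_V(x)a = S(a), r_V(x)a = T(a), f(x,x) = a1, x∗x = kx, x◁a = η(a)x, x▷a = D(a), h = 0, {·,·} = 0, is a bijection between the set F(A) of all GD flag datums of (A,∘,[·,·]) and the set GD(A,V) of all GD extending structures of A by V. -/

import Mathlib

namespace GDExt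

def IsNovikov {M : Type*} [AddCommGroup M] (mul : M → M → M) : Prop :=
  (∀ a b c, mul (mul a b) c - mul a (mul b c) = mul (mul b a) c - mul b (mul a c)) ∧
  ∀ a b c, mul (mul a b) c = mul (mul a c) b

def IsLieBracket {M : Type*} [AddCommGroup M] (br : M → M → M) : Prop :=
  (∀ a, br a a = 0) ∧ ∀ a b c, br a (br b c) = br (br a b) c + br b (br a c)

def IsGD {M : Type*} [AddCommGroup M] (mul br : M → M → M) : Prop :=
  IsNovikov mul ∧ IsLieBracket br ∧
  ∀ a b c, br a (mul b c) - br c (mul b a) + mul (br b a) c - mul (br b c) a - mul b (br a c) = 0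

variable {K : Type*} [Field K]
variable {A V : Type*} [AddCommGroup A] [Module K A] [AddCommGroup V] [Module K V]

/-- First component bilinear product of the unified product `A ♮ V`. -/
def uniMul (circ : A →ₗ[K] A →ₗ[K] A) (lA rA : A →ₗ[K] Module.End K V)
    (lV rV : V →ₗ[K] Module.End K A) (f : V →ₗ[K] V →ₗ[K] A)
    (st : V →ₗ[K] V →ₗ[K] V) : A × V → A × V → A × V :=
  fun p q =>
    (circ p.1 q.1 + lV p.2 q.1 + rV q.2 p.1 + f p.2 q.2,
     st p.2 q.2 + lA p.1 q.2 + rA q.1 p.2)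

/-- Bracket of the unified product `A ♮ V`. -/
def uniBr (brk : A →ₗ[K] A →ₗ[K] A) (tl : V →ₗ[K] A →ₗ[K] V) (tr : V →ₗ[K] A →ₗ[K] A)
    (hm : V →ₗ[K] V →ₗ[K] A) (vbr : V →ₗ[K] V →ₗ[K] V) : A × V → A × V → A × V :=
  fun p q =>
    (brk p.1 q.1 + tr p.2 q.1 - tr q.2 p.1 + hm p.2 q.2,
     vbr p.2 q.2 + tl p.2 q.1 - tl q.2 p.1)

end GDExt

namespace GDExt

variable (K : Type*) [Field K]
variable (A V : Type*) [AddCommGroup A] [Module K A] [AddCommGroup V] [Module K V]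

/-- An extending datum of a GD bialgebra `A` by a vector space `V`. -/
structure ExtDatum where
  lA : A →ₗ[K] Module.End K V
  rA : A →ₗ[K] Module.End K V
  lV : V →ₗ[K] Module.End K A
  rV : V →ₗ[K] Module.End K A
  f : V →ₗ[K] V →ₗ[K] A
  st : V →ₗ[K] V →ₗ[K] V
  tl : V →ₗ[K] A →ₗ[K] V
  tr : V →ₗ[K] A →ₗ[K] A
  hm : V →ₗ[K] V →ₗ[K] A
  vbr : V →ₗ[K] V →ₗ[K] V

variable {K A V}

/-- The multiplication of the unified product associated to an extending datum. -/
def ExtDatum.mulMap (circ : A →ₗ[K] A →ₗ[K] A) (ω : ExtDatum K A V) : A × V → A × V → A × V :=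
  uniMul circ ω.lA ω.rA ω.lV ω.rV ω.f ω.st

/-- The bracket of the unified product associated to an extending datum. -/
def ExtDatum.brMap (brk : A →ₗ[K] A →ₗ[K] A) (ω : ExtDatum K A V) : A × V → A × V → A × V :=
  uniBr brk ω.tl ω.tr ω.hm ω.vbr

/-- Conditions (D1)-(D10) relating two extending data via a pair `(λ, μ)`. -/
def DCond (circ brk : A →ₗ[K] A →ₗ[K] A) (ω ω' : ExtDatum K A V)
    (l : V →ₗ[K] A) (m : V ≃ₗ[K] V) : Prop :=
  -- (D1)
  (∀ (a : A) (x : V), ω.rA a x = m.symm (ω'.rA a (m x))) ∧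
  -- (D2)
  (∀ (a : A) (x : V), ω.lA a x = m.symm (ω'.lA a (m x))) ∧
  -- (D3)
  (∀ (a : A) (x : V), ω.lV x a = circ (l x) a + ω'.lV (m x) a - l (m.symm (ω'.rA a (m x)))) ∧
  -- (D4)
  (∀ (a : A) (x : V), ω.rV x a = circ a (l x) + ω'.rV (m x) a - l (m.symm (ω'.lA a (m x)))) ∧
  -- (D5)
  (∀ x y : V, ω.st x y = m.symm (ω'.st (m x) (m y)) + m.symm (ω'.lA (l x) (m y))
      + m.symm (ω'.rA (l y) (m x))) ∧
  -- (D6)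
  (∀ x y : V, ω.f x y = circ (l x) (l y) + ω'.lV (m x) (l y) + ω'.rV (m y) (l x)
      + ω'.f (m x) (m y) - l (m.symm (ω'.st (m x) (m y))) - l (m.symm (ω'.lA (l x) (m y)))
      - l (m.symm (ω'.rA (l y) (m x)))) ∧
  -- (D7)
  (∀ (a : A) (x : V), ω.tl x a = m.symm (ω'.tl (m x) a)) ∧
  -- (D8)
  (∀ (a : A) (x : V), ω.tr x a = brk (l x) a + ω'.tr (m x) a - l (m.symm (ω'.tl (m x) a))) ∧
  -- (D9)
  (∀ x y : V, ω.hm x y = brk (l x) (l y) + ω'.tr (m x) (l y) - ω'.tr (m y) (l x)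
      + ω'.hm (m x) (m y) - l (m.symm (ω'.vbr (m x) (m y))) - l (m.symm (ω'.tl (m x) (l y)))
      + l (m.symm (ω'.tl (m y) (l x)))) ∧
  -- (D10)
  (∀ x y : V, ω.vbr x y = m.symm (ω'.vbr (m x) (m y)) + m.symm (ω'.tl (m x) (l y))
      - m.symm (ω'.tl (m y) (l x)))

/-- Two extending data are equivalent if they are related by some pair `(λ, μ)`
via conditions (D1)-(D10). -/
def DEquiv (circ brk : A →ₗ[K] A →ₗ[K] A) (ω ω' : ExtDatum K A V) : Prop :=
  ∃ (l : V →ₗ[K] A) (m : V ≃ₗ[K] V), DCond circ brk ω ω' l m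

end GDExt

namespace GDExt

variable (K : Type*) [Field K]
variable (A : Type*) [AddCommGroup A] [Module K A]

/-- The data of a Gel'fand-Dorfman flag datum. -/
structure FlagData where
  p : A →ₗ[K] K
  q : A →ₗ[K] K
  S : A →ₗ[K] A
  T : A →ₗ[K] A
  a1 : A
  k : K
  eta : A →ₗ[K] K
  D : A →ₗ[K] A

variable {K A}

/-- Conditions (FN1)-(FN10), (TD1)-(TD2) and (GF1)-(GF6) for a GD flag datum of the
GD bialgebra `(A, circ, brk)`. -/
def IsFlagDatum (circ brk : A →ₗ[K] A →ₗ[K] A) (d : FlagData K A) : Prop :=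
  -- (FN1)
  (∀ a b : A, d.p (circ a b) = d.p (circ b a)) ∧
  (∀ a b : A, d.q (circ a b) = d.q a * d.q b) ∧
  -- (FN2)
  (∀ a b : A, d.S (circ a b) = circ (d.S a) b + circ a (d.S b) + (d.q a - d.p a) • d.S b
      + d.q b • d.T a - circ (d.T a) b) ∧
  -- (FN3)
  (∀ a b : A, d.T (circ a b) - d.T (circ b a)
      = d.p b • d.T a - d.p a • d.T b + circ a (d.T b) - circ b (d.T a)) ∧
  -- (FN4)
  (∀ a : A, d.T (d.T a) = d.T (d.S a) - d.S (d.T a) + circ a d.a1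
      + (d.q a - 2 * d.p a) • d.a1 + d.k • d.T a) ∧
  -- (FN5)
  (∀ a : A, d.p (d.S a) - d.p (d.T a) = d.q (d.T a) + d.k * (d.p a - d.q a)) ∧
  -- (FN6)
  (∀ a b : A, circ (d.S a) b + d.q a • d.S b = circ (d.S b) a + d.q b • d.S a) ∧
  -- (FN7)
  (∀ a b : A, d.T (circ a b) = circ (d.T a) b + d.p a • d.S b) ∧
  -- (FN8)
  (∀ a b : A, d.p (circ a b) = d.p a * d.q b) ∧
  -- (FN9)
  (∀ a : A, d.T (d.S a) = circ d.a1 a + d.k • d.S a - d.q a • d.a1) ∧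
  -- (FN10)
  (∀ a : A, d.p (d.S a) = 0) ∧
  -- (TD1)
  (∀ a b : A, d.eta (brk a b) = 0) ∧
  -- (TD2)
  (∀ a b : A, d.D (brk a b) = brk (d.D a) b + brk a (d.D b) + d.eta a • d.D b - d.eta b • d.D a) ∧
  -- (GF1)
  (∀ a b : A, brk a (d.T b) - d.p b • d.D a - d.D (circ b a) + d.T (brk b a)
      + circ (d.D b) a + d.eta b • d.S a + circ b (d.D a) + d.eta a • d.T b = 0) ∧
  -- (GF2)
  (∀ a b : A, d.p (brk b a) + d.eta b * d.q a - d.eta (circ b a) = 0) ∧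
  -- (GF3)
  (∀ a b : A, brk a (d.S b) - d.q b • d.D a - brk b (d.S a) + d.q a • d.D b
      + circ (d.D a) b + d.eta a • d.S b - circ (d.D b) a - d.eta b • d.S a
      - d.S (brk a b) = 0) ∧
  -- (GF4)
  (∀ a b : A, d.q (brk a b) = 0) ∧
  -- (GF5)
  (∀ a : A, brk a d.a1 - d.k • d.D a - d.D (d.S a) + d.T (d.D a)
      + (2 * d.eta a) • d.a1 + d.S (d.D a) = 0) ∧
  -- (GF6)
  (∀ a : A, d.k * d.eta a - d.eta (d.S a) + d.p (d.D a) + d.q (d.D a) = 0)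

end GDExt

/-!
Identifying `V` with `K` through `x`, an extending datum with `hm = 0` and `vbr = 0` is the same
thing as a flag datum, and the unified product and bracket on `A × V` become the operations
`FlagData.coordMul`, `FlagData.coordBr` on `A × K`. Each GD identity on `A × K` is trilinear, so
at `((a, s), (b, t), (c, u))` it is a combination of its values on triples of the generators
`(a, 0)`, `(0, 1)`, with monomials in `s, t, u` as coefficients. On `A³` these values are the GD
identities of `A`, and on the other triples their two components are the conditions (FN1)-(GF6).
Alternativity of the bracket at `(0, x)` forces `hm = 0` and `vbr = 0`, so every GD extending
structure comes from a flag datum.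
-/

section LineEquiv

variable {K V M : Type*} [Field K] [AddCommGroup V] [Module K V] [AddCommGroup M] [Module K M]

theorem exists_linearEquiv_apply_one {x : V} (hx : ∀ v : V, ∃! c : K, v = c • x) :
    ∃ ψ : K ≃ₗ[K] V, ψ 1 = x :=
  ⟨LinearEquiv.ofBijective (LinearMap.toSpanSingleton K V x)
    ⟨fun c _ h => (hx (c • x)).unique rfl h, fun v => (hx v).exists.imp fun _ h => h.symm⟩,
    one_smul K x⟩

variable (ψ : K ≃ₗ[K] V)

@[simp]
theorem LinearEquiv.symm_apply_smul_apply_one (v : V) : ψ.symm v • ψ 1 = v := by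
  rw [← map_smul, smul_eq_mul, mul_one, LinearEquiv.apply_symm_apply]

theorem LinearMap.ext_of_equiv_apply_one {f g : V →ₗ[K] M} (h : f (ψ 1) = g (ψ 1)) : f = g :=
  (LinearEquiv.eq_comp_toLinearMap_iff f g).1 (LinearMap.ext_ring h)

end LineEquiv

namespace GDExt

attribute [ext] ExtDatum FlagData

section Coordinates

variable {K : Type*} [Field K] {A : Type*} [AddCommGroup A] [Module K A]

def FlagData.coordMul (circ : A →ₗ[K] A →ₗ[K] A) (d : FlagData K A) :
    A × K → A × K → A × K :=
  fun P Q => (circ P.1 Q.1 + P.2 • d.S Q.1 + Q.2 • d.T P.1 + (P.2 * Q.2) • d.a1,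
    P.2 * Q.2 * d.k + Q.2 * d.p P.1 + P.2 * d.q Q.1)

def FlagData.coordBr (brk : A →ₗ[K] A →ₗ[K] A) (d : FlagData K A) :
    A × K → A × K → A × K :=
  fun P Q => (brk P.1 Q.1 + P.2 • d.D Q.1 - Q.2 • d.D P.1, P.2 * d.eta Q.1 - Q.2 * d.eta P.1)

variable {circ brk : A →ₗ[K] A →ₗ[K] A} {d : FlagData K A}

theorem isNovikov_coordMul (hA : IsNovikov (fun a b => circ a b))
    (hd : IsFlagDatum circ brk d) : IsNovikov (d.coordMul circ) := by
  obtain ⟨hA1, hA2⟩ := hA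
  obtain ⟨hFN1a, hFN1b, hFN2, hFN3, hFN4, hFN5, hFN6, hFN7, hFN8, hFN9, hFN10, -⟩ := hd
  constructor <;> rintro ⟨a, s⟩ ⟨b, t⟩ ⟨c, u⟩ <;>
    simp only [FlagData.coordMul, map_add, map_smul, LinearMap.add_apply, LinearMap.smul_apply,
      Prod.mk.injEq, Prod.mk_sub_mk, smul_eq_mul] <;> constructor
  · linear_combination (norm := module) hA1 a b c + u • hFN3 a b + t • hFN2 a c
      + (t * u) • hFN4 a - s • hFN2 b c - (s * u) • hFN4 b
  · linear_combination u * hFN1a a b + t * hFN1b a c - (t * u) * hFN5 a - s * hFN1b b c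
      + (s * u) * hFN5 b
  · linear_combination (norm := module) hA2 a b c + u • hFN7 a b - t • hFN7 a c + s • hFN6 b c
      + (s * u) • hFN9 b - (s * t) • hFN9 c
  · linear_combination u * hFN8 a b - t * hFN8 a c + (s * u) * hFN10 b - (s * t) * hFN10 c

theorem isLieBracket_coordBr (hA : IsLieBracket (fun a b => brk a b))
    (hd : IsFlagDatum circ brk d) : IsLieBracket (d.coordBr brk) := by
  obtain ⟨hJ0, hJ⟩ := hA
  obtain ⟨-, -, -, -, -, -, -, -, -, -, -, hTD1, hTD2, -⟩ := hd
  have halt : brk.IsAlt := hJ0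
  constructor
  · rintro ⟨a, s⟩
    simp [FlagData.coordBr, hJ0]
  · rintro ⟨a, s⟩ ⟨b, t⟩ ⟨c, u⟩
    simp only [FlagData.coordBr, map_add, map_sub, map_smul, LinearMap.add_apply,
      LinearMap.sub_apply, LinearMap.smul_apply, Prod.mk.injEq, Prod.mk_add_mk, smul_eq_mul]
    constructor
    · linear_combination (norm := module) hJ a b c + u • hTD2 a b - u • halt.neg b (d.D a)
        - t • hTD2 a c + s • hTD2 b c
    · linear_combination u * hTD1 a b - t * hTD1 a c + s * hTD1 b c

theorem isGD_coord_of_isFlagDatum (hA : IsGD (fun a b => circ a b) (fun a b => brk a b))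
    (hd : IsFlagDatum circ brk d) : IsGD (d.coordMul circ) (d.coordBr brk) := by
  obtain ⟨hN, hL, hC⟩ := hA
  refine ⟨isNovikov_coordMul hN hd, isLieBracket_coordBr hL hd, ?_⟩
  obtain ⟨-, -, -, -, -, -, -, -, -, -, -, -, -, hG1, hG2, hG3, hG4, hG5, hG6⟩ := hd
  rintro ⟨a, s⟩ ⟨b, t⟩ ⟨c, u⟩
  simp only [FlagData.coordMul, FlagData.coordBr, map_add, map_sub, map_smul, LinearMap.add_apply,
    LinearMap.sub_apply, LinearMap.smul_apply, Prod.mk_add_mk, Prod.mk_sub_mk, smul_eq_mul,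
    Prod.mk_eq_zero]
  constructor
  · linear_combination (norm := module) hC a b c + u • hG1 a b + t • hG3 a c + (t * u) • hG5 a
      - s • hG1 c b - (s * t) • hG5 c
  · linear_combination u * hG2 a b - t * hG4 a c + (t * u) * hG6 a - s * hG2 c b - (s * t) * hG6 c

theorem isFlagDatum_of_isGD_coord (h : IsGD (d.coordMul circ) (d.coordBr brk)) :
    IsFlagDatum circ brk d := by
  obtain ⟨⟨hls, hrc⟩, ⟨-, hjac⟩, hcomp⟩ := h
  -- `1` stands for the generator `(0, 1)`, letters for `(a, 0)`, `(b, 0)`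
  have ls_ab1 := fun a b : A => hls (a, 0) (b, 0) (0, 1)
  have ls_a1b := fun a b : A => hls (a, 0) (0, 1) (b, 0)
  have ls_a11 := fun a : A => hls (a, 0) (0, 1) (0, 1)
  have rc_1ab := fun a b : A => hrc (0, 1) (a, 0) (b, 0)
  have rc_ab1 := fun a b : A => hrc (a, 0) (b, 0) (0, 1)
  have rc_1a1 := fun a : A => hrc (0, 1) (a, 0) (0, 1)
  have jac_1ab := fun a b : A => hjac (0, 1) (a, 0) (b, 0)
  have comp_ab1 := fun a b : A => hcomp (a, 0) (b, 0) (0, 1)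
  have comp_a1b := fun a b : A => hcomp (a, 0) (0, 1) (b, 0)
  have comp_a11 := fun a : A => hcomp (a, 0) (0, 1) (0, 1)
  simp only [FlagData.coordMul, FlagData.coordBr, map_add, map_sub, map_smul, map_zero,
    LinearMap.add_apply, LinearMap.sub_apply, LinearMap.smul_apply, LinearMap.zero_apply,
    Prod.mk_add_mk, Prod.mk_sub_mk, Prod.mk.injEq, Prod.mk_eq_zero, smul_eq_mul, forall_and]
    at ls_ab1 ls_a1b ls_a11 rc_1ab rc_ab1 rc_1a1 jac_1ab comp_ab1 comp_a1b comp_a11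
  exact ⟨fun a b => by linear_combination ls_ab1.2 a b,
    fun a b => by linear_combination ls_a1b.2 a b,
    fun a b => by linear_combination (norm := module) ls_a1b.1 a b,
    fun a b => by linear_combination (norm := module) ls_ab1.1 a b,
    fun a => by linear_combination (norm := module) ls_a11.1 a,
    fun a => by linear_combination -ls_a11.2 a,
    fun a b => by linear_combination (norm := module) rc_1ab.1 a b,
    fun a b => by linear_combination (norm := module) rc_ab1.1 a b,
    fun a b => by linear_combination rc_ab1.2 a b,
    fun a => by linear_combination (norm := module) rc_1a1.1 a,
    fun a => by linear_combination rc_1a1.2 a,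
    fun a b => by linear_combination jac_1ab.2 a b,
    fun a b => by linear_combination (norm := module) jac_1ab.1 a b,
    fun a b => by linear_combination (norm := module) comp_ab1.1 a b,
    fun a b => by linear_combination comp_ab1.2 a b,
    fun a b => by linear_combination (norm := module) comp_a1b.1 a b,
    fun a b => by linear_combination -comp_a1b.2 a b,
    fun a => by linear_combination (norm := module) comp_a11.1 a,
    fun a => by linear_combination comp_a11.2 a⟩

end Coordinates

section Transport

variable {M N : Type*} [AddCommGroup M] [AddCommGroup N]
  {m₁ b₁ : M → M → M} {m₂ b₂ : N → N → N}

theorem IsGD.of_addEquiv (φ : M ≃+ N) (hm : ∀ a b, φ (m₁ a b) = m₂ (φ a) (φ b))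
    (hb : ∀ a b, φ (b₁ a b) = b₂ (φ a) (φ b)) (h : IsGD m₂ b₂) : IsGD m₁ b₁ := by
  obtain ⟨⟨hls, hrc⟩, ⟨halt, hjac⟩, hcomp⟩ := h
  refine ⟨⟨fun a b c => φ.injective ?_, fun a b c => φ.injective ?_⟩,
    ⟨fun a => φ.injective ?_, fun a b c => φ.injective ?_⟩, fun a b c => φ.injective ?_⟩ <;>
    simp only [map_sub, map_add, map_zero, hm, hb]
  · exact hls _ _ _
  · exact hrc _ _ _
  · exact halt _
  · exact hjac _ _ _
  · exact hcomp _ _ _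

theorem isGD_congr (φ : M ≃+ N) (hm : ∀ a b, φ (m₁ a b) = m₂ (φ a) (φ b))
    (hb : ∀ a b, φ (b₁ a b) = b₂ (φ a) (φ b)) : IsGD m₁ b₁ ↔ IsGD m₂ b₂ := by
  have symm_hom {f₁ : M → M → M} {f₂ : N → N → N} (hf : ∀ a b, φ (f₁ a b) = f₂ (φ a) (φ b))
      (a b : N) : φ.symm (f₂ a b) = f₁ (φ.symm a) (φ.symm b) :=
    φ.injective (by simp [hf])
  exact ⟨IsGD.of_addEquiv φ.symm (symm_hom hm) (symm_hom hb), IsGD.of_addEquiv φ hm hb⟩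

end Transport

section OneDimensional

variable {K : Type*} [Field K] {A V : Type*} [AddCommGroup A] [Module K A]
  [AddCommGroup V] [Module K V] (ψ : K ≃ₗ[K] V) {circ brk : A →ₗ[K] A →ₗ[K] A}

def FlagData.toExtDatum (d : FlagData K A) : ExtDatum K A V where
  lA := d.p.smulRight LinearMap.id
  rA := d.q.smulRight LinearMap.id
  lV := ψ.symm.toLinearMap.smulRight d.S
  rV := ψ.symm.toLinearMap.smulRight d.T
  f := ψ.symm.toLinearMap.smulRight (ψ.symm.toLinearMap.smulRight d.a1)
  st := ψ.symm.toLinearMap.smulRight (ψ.symm.toLinearMap.smulRight (d.k • ψ 1))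
  tl := ψ.symm.toLinearMap.smulRight (d.eta.smulRight (ψ 1))
  tr := ψ.symm.toLinearMap.smulRight d.D
  hm := 0
  vbr := 0

def ExtDatum.toFlagData (e : ExtDatum K A V) : FlagData K A where
  p := ψ.symm.toLinearMap ∘ₗ e.lA.flip (ψ 1)
  q := ψ.symm.toLinearMap ∘ₗ e.rA.flip (ψ 1)
  S := e.lV (ψ 1)
  T := e.rV (ψ 1)
  a1 := e.f (ψ 1) (ψ 1)
  k := ψ.symm (e.st (ψ 1) (ψ 1))
  eta := ψ.symm.toLinearMap ∘ₗ e.tl (ψ 1)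
  D := e.tr (ψ 1)

theorem FlagData.toFlagData_toExtDatum (d : FlagData K A) :
    (d.toExtDatum ψ).toFlagData ψ = d := by
  ext <;> simp [FlagData.toExtDatum, ExtDatum.toFlagData]

theorem ExtDatum.hm_self_eq_zero_and_vbr_self_eq_zero {e : ExtDatum K A V}
    (h : IsLieBracket (e.brMap brk)) (v : V) : e.hm v v = 0 ∧ e.vbr v v = 0 := by
  simpa [ExtDatum.brMap, uniBr, Prod.ext_iff] using h.1 (0, v)

theorem ExtDatum.toExtDatum_toFlagData {e : ExtDatum K A V} (h : IsLieBracket (e.brMap brk)) :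
    (e.toFlagData ψ).toExtDatum ψ = e := by
  obtain ⟨hhm, hvbr⟩ := hm_self_eq_zero_and_vbr_self_eq_zero h (ψ 1)
  ext1 <;> first
    | refine LinearMap.ext_of_equiv_apply_one ψ (LinearMap.ext_of_equiv_apply_one ψ ?_)
    | refine LinearMap.ext_of_equiv_apply_one ψ (LinearMap.ext fun a => ?_)
    | refine LinearMap.ext_of_equiv_apply_one ψ ?_
    | refine LinearMap.ext fun a => LinearMap.ext_of_equiv_apply_one ψ ?_
  all_goals simp [FlagData.toExtDatum, toFlagData, hhm, hvbr]

def coordEquiv : (A × V) ≃ₗ[K] (A × K) := (LinearEquiv.refl K A).prodCongr ψ.symm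

theorem FlagData.coordEquiv_mulMap (d : FlagData K A) (P Q : A × V) :
    coordEquiv ψ ((d.toExtDatum ψ).mulMap circ P Q)
      = d.coordMul circ (coordEquiv ψ P) (coordEquiv ψ Q) := by
  obtain ⟨a, u⟩ := P
  obtain ⟨b, v⟩ := Q
  simp [coordEquiv, ExtDatum.mulMap, uniMul, FlagData.toExtDatum, FlagData.coordMul, smul_smul]
  ring

theorem FlagData.coordEquiv_brMap (d : FlagData K A) (P Q : A × V) :
    coordEquiv ψ ((d.toExtDatum ψ).brMap brk P Q)
      = d.coordBr brk (coordEquiv ψ P) (coordEquiv ψ Q) := by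
  obtain ⟨a, u⟩ := P
  obtain ⟨b, v⟩ := Q
  simp [coordEquiv, ExtDatum.brMap, uniBr, FlagData.toExtDatum, FlagData.coordBr]

theorem FlagData.isGD_toExtDatum_iff (hA : IsGD (fun a b => circ a b) (fun a b => brk a b))
    (d : FlagData K A) :
    IsGD ((d.toExtDatum ψ).mulMap circ) ((d.toExtDatum ψ).brMap brk) ↔ IsFlagDatum circ brk d :=
  (isGD_congr (coordEquiv ψ).toAddEquiv (d.coordEquiv_mulMap ψ) (d.coordEquiv_brMap ψ)).trans
    ⟨isFlagDatum_of_isGD_coord, isGD_coord_of_isFlagDatum hA⟩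

def flagDatumEquiv (hA : IsGD (fun a b => circ a b) (fun a b => brk a b)) :
    {d : FlagData K A // IsFlagDatum circ brk d}
      ≃ {e : ExtDatum K A V // IsGD (e.mulMap circ) (e.brMap brk)} where
  toFun d := ⟨d.1.toExtDatum ψ, (d.1.isGD_toExtDatum_iff ψ hA).2 d.2⟩
  invFun e := ⟨e.1.toFlagData ψ, by
    rw [← (e.1.toFlagData ψ).isGD_toExtDatum_iff ψ hA, ExtDatum.toExtDatum_toFlagData ψ e.2.2.1]
    exact e.2⟩
  left_inv d := Subtype.ext (d.1.toFlagData_toExtDatum ψ)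
  right_inv e := Subtype.ext (ExtDatum.toExtDatum_toFlagData ψ e.2.2.1)

end OneDimensional

theorem flag_datum_bijection_dim_one
    {K A V : Type*} [Field K] [AddCommGroup A] [Module K A] [AddCommGroup V] [Module K V]
    (circ brk : A →ₗ[K] A →ₗ[K] A)
    (hGD : IsGD (fun a b => circ a b) (fun a b => brk a b))
    (x : V) (hx : ∀ v : V, ∃! c : K, v = c • x) :
    ∃ Φ : {d : FlagData K A // IsFlagDatum circ brk d}
        → {e : ExtDatum K A V // IsGD (e.mulMap circ) (e.brMap brk)},
      Function.Bijective Φ ∧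
      ∀ d : {d : FlagData K A // IsFlagDatum circ brk d},
        (∀ a : A, (Φ d).1.lA a x = d.1.p a • x) ∧
        (∀ a : A, (Φ d).1.rA a x = d.1.q a • x) ∧
        (∀ a : A, (Φ d).1.lV x a = d.1.S a) ∧
        (∀ a : A, (Φ d).1.rV x a = d.1.T a) ∧
        ((Φ d).1.f x x = d.1.a1) ∧
        ((Φ d).1.st x x = d.1.k • x) ∧
        (∀ a : A, (Φ d).1.tl x a = d.1.eta a • x) ∧
        (∀ a : A, (Φ d).1.tr x a = d.1.D a) ∧
        ((Φ d).1.hm = 0) ∧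
        ((Φ d).1.vbr = 0) := by
  obtain ⟨ψ, rfl⟩ := exists_linearEquiv_apply_one hx
  refine ⟨flagDatumEquiv ψ hGD, (flagDatumEquiv ψ hGD).bijective, fun d => ?_⟩
  simp [flagDatumEquiv, FlagData.toExtDatum]

end GDExt
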